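/- arXiv:math/9712244 — 2 statements merged into one kernel-verified Lean document; each statement's English description precedes it below -/
import Mathlib

section
/- Fix positive integers N and l with 1 ≤ l ≤ N, and let D(m;N,l) be the N×N matrix with (i,j)-entry equal to (m+i−j+1)_{j−1}(N+j−2i+2)_{N−j}(N+2m−j+1)/2 if i ≠ l, and (m+i−j+1)_{j−1}(N+j−2i+1)_{N−j+1} if i = l, regarded as a matrix over the ring of polynomials in m with rational coefficients. Then det D(−N−m; N, l) = (−1)^{N(N+1)/2 − 1} det D(m; N, l) as polynomials in m. -/
open Polynomial

/-- The shifted factorial `(p)_k = p(p+1)⋯(p+k-1)` of a polynomial. -/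
noncomputable def pochP (p : ℚ[X]) (k : ℕ) : ℚ[X] :=
  ∏ t ∈ Finset.range k, (p + (t : ℚ[X]))

/-- The matrix `D(m;N,l)` over `ℚ[m]`, with the variable `m` replaced by the
polynomial `p`: its `(i,j)`-entry (indices `1,…,N`) is
`(m+i−j+1)_{j−1}(N+j−2i+2)_{N−j}(N+2m−j+1)/2` if `i ≠ l` and
`(m+i−j+1)_{j−1}(N+j−2i+1)_{N−j+1}` if `i = l`. -/
noncomputable def Dmat (N l : ℕ) (p : ℚ[X]) : Matrix (Fin N) (Fin N) ℚ[X] :=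
  Matrix.of fun i j =>
    if i.1 + 1 = l then
      pochP (p + C (((i.1 + 1 : ℕ) : ℚ) - (j.1 + 1) + 1)) j.1 *
        pochP (C ((N : ℚ) + (j.1 + 1) - 2 * (i.1 + 1) + 1)) (N - (j.1 + 1) + 1)
    else
      pochP (p + C (((i.1 + 1 : ℕ) : ℚ) - (j.1 + 1) + 1)) j.1 *
        pochP (C ((N : ℚ) + (j.1 + 1) - 2 * (i.1 + 1) + 2)) (N - (j.1 + 1)) *
        ((2 * p + C ((N : ℚ) - (j.1 + 1) + 1)) * C (1 / 2 : ℚ))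

section Helpers

open Finset

lemma pochP_zero (p : ℚ[X]) : pochP p 0 = 1 := by simp [pochP]

lemma pochP_succ (p : ℚ[X]) (k : ℕ) : pochP p (k+1) = pochP p k * (p + k) :=
  Finset.prod_range_succ _ _

lemma pochP_succ_left (p : ℚ[X]) (k : ℕ) : pochP p (k+1) = p * pochP (p+1) k := by
  unfold pochP
  rw [Finset.prod_range_succ']
  simp only [Nat.cast_zero, add_zero]
  rw [mul_comm]
  congr 1
  refine Finset.prod_congr rfl fun t _ => ?_
  push_cast
  ring

lemma pochP_congr {p q : ℚ[X]} (k : ℕ) (h : p = q) : pochP p k = pochP q k := by rw [h]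

lemma C2 : (C (2:ℚ) : ℚ[X]) = 2 := map_ofNat _ 2

lemma twoHalf : (2:ℚ[X]) * C (1/2:ℚ) = 1 := by
  rw [← C2, ← C_mul]; norm_num

lemma linComb (v w : ℚ) (k : ℕ) :
    -(C v * C (1/2:ℚ)) + (X + C w + (k:ℚ[X]))
    = (2*X + C (2*w + 2*(k:ℚ) - v)) * C (1/2:ℚ) := by
  simp only [map_add, map_sub, map_mul, map_neg, map_one, C_eq_natCast, C2]
  linear_combination (-(X + C w + (k:ℚ[X]))) * twoHalf

lemma linComb0 (v w : ℚ) :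
    -(C v * C (1/2:ℚ)) + (X + C w) = (2*X + C (2*w - v)) * C (1/2:ℚ) := by
  simp only [map_add, map_sub, map_mul, map_neg, map_one, C_eq_natCast, C2]
  linear_combination (-(X + C w)) * twoHalf

lemma master (k : ℕ) : ∀ (a c : ℚ[X]) (d : ℕ),
    ∑ j ∈ Finset.range (k+1),
      (Nat.choose k j : ℚ[X]) * (pochP (a - j) j * pochP (c + j + 1) ((k - j) + d))
      = pochP (a + c) k * pochP (c + k + 1) d := by
  induction k with
  | zero =>
    intro a c d
    simp [pochP_zero]
  | succ k ih =>
    intro a c d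
    rw [Finset.sum_range_succ']
    have hsplit : ∀ j ∈ Finset.range (k+1),
        ((k+1).choose (j+1) : ℚ[X]) *
          (pochP (a - ↑(j+1)) (j+1) * pochP (c + ↑(j+1) + 1) ((k+1 - (j+1)) + d))
        = (k.choose j : ℚ[X]) *
            (pochP (a - ↑(j+1)) (j+1) * pochP (c + ↑(j+1) + 1) ((k+1 - (j+1)) + d))
          + (k.choose (j+1) : ℚ[X]) *
            (pochP (a - ↑(j+1)) (j+1) * pochP (c + ↑(j+1) + 1) ((k+1 - (j+1)) + d)) := by
      intro j _
      rw [Nat.choose_succ_succ]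
      push_cast
      ring
    rw [Finset.sum_congr rfl hsplit, Finset.sum_add_distrib]
    have hstep2 :
        (∑ j ∈ Finset.range (k+1), (k.choose (j+1) : ℚ[X]) *
          (pochP (a - ↑(j+1)) (j+1) * pochP (c + ↑(j+1) + 1) ((k+1 - (j+1)) + d)))
        + ((k+1).choose 0 : ℚ[X]) * (pochP (a - ↑(0:ℕ)) 0 * pochP (c + ↑(0:ℕ) + 1) ((k+1 - 0) + d))
        = pochP (a + c) k * pochP (c + ↑k + 1) (d+1) := by
      have h0 : ((k+1).choose 0 : ℚ[X]) * (pochP (a - ↑(0:ℕ)) 0 * pochP (c + ↑(0:ℕ) + 1) ((k+1 - 0) + d))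
          = (k.choose 0 : ℚ[X]) * (pochP (a - ↑(0:ℕ)) 0 * pochP (c + ↑(0:ℕ) + 1) ((k+1 - 0) + d)) := by
        norm_num
      rw [h0, ← Finset.sum_range_succ' (fun j => (k.choose j : ℚ[X]) *
        (pochP (a - (j:ℚ[X])) j * pochP (c + (j:ℚ[X]) + 1) ((k+1 - j) + d))) (k+1)]
      rw [Finset.sum_range_succ]
      rw [Nat.choose_succ_self]
      push_cast
      rw [zero_mul, add_zero]
      have hcongr : ∀ j ∈ Finset.range (k+1),
          (k.choose j : ℚ[X]) * (pochP (a - ↑j) j * pochP (c + ↑j + 1) ((k+1 - j) + d))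
          = (k.choose j : ℚ[X]) * (pochP (a - ↑j) j * pochP (c + ↑j + 1) ((k - j) + (d+1))) := by
        intro j hj
        simp only [Finset.mem_range] at hj
        have he : (k+1 - j) + d = (k - j) + (d+1) := by omega
        rw [he]
      rw [Finset.sum_congr rfl hcongr, ih a c (d+1)]
    have hstep1 :
        (∑ j ∈ Finset.range (k+1), (k.choose j : ℚ[X]) *
          (pochP (a - ↑(j+1)) (j+1) * pochP (c + ↑(j+1) + 1) ((k+1 - (j+1)) + d)))
        = (a - 1) * (pochP (a + c) k * pochP ((c+1) + ↑k + 1) d) := by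
      have hcongr : ∀ j ∈ Finset.range (k+1),
          (k.choose j : ℚ[X]) *
            (pochP (a - ↑(j+1)) (j+1) * pochP (c + ↑(j+1) + 1) ((k+1 - (j+1)) + d))
          = (a - 1) * ((k.choose j : ℚ[X]) *
              (pochP ((a-1) - ↑j) j * pochP ((c+1) + ↑j + 1) ((k - j) + d))) := by
        intro j hj
        have h1 : pochP (a - ↑(j+1)) (j+1) = pochP ((a-1) - ↑j) j * (a - 1) := by
          rw [pochP_succ]
          have e1 : a - ↑(j+1) = (a-1) - (j:ℚ[X]) := by push_cast; ring
          have e2 : a - ↑(j+1) + (j:ℚ[X]) = a - 1 := by push_cast; ring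
          rw [e2, e1]
        have h2 : pochP (c + ↑(j+1) + 1) ((k+1 - (j+1)) + d)
            = pochP ((c+1) + ↑j + 1) ((k - j) + d) := by
          have e1 : c + ((j:ℚ[X])+1) + 1 = (c+1) + (j:ℚ[X]) + 1 := by ring
          have e2 : (k+1 - (j+1)) + d = (k - j) + d := by omega
          push_cast
          rw [e1]
          try rw [e2]
        rw [h1, h2]
        ring
      rw [Finset.sum_congr rfl hcongr, ← Finset.mul_sum, ih (a-1) (c+1) d]
      have e3 : a - 1 + (c + 1) = a + c := by ring
      rw [e3]
    rw [hstep1, add_assoc, hstep2]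
    have eL : pochP (c + ↑k + 1) (d+1) = (c + ↑k + 1) * pochP ((c+1) + ↑k + 1) d := by
      rw [pochP_succ_left]
      have : c + ↑k + 1 + 1 = (c+1) + (k:ℚ[X]) + 1 := by ring
      rw [this]
    have eR1 : pochP (a + c) (k+1) = pochP (a + c) k * (a + c + k) := pochP_succ _ _
    have eR2 : pochP (c + ↑(k+1) + 1) d = pochP ((c+1) + ↑k + 1) d := by
      apply pochP_congr
      push_cast
      ring
    rw [eL, eR1, eR2]
    ring

end Helpers
section Cols
open Finset

lemma colEq (N k : ℕ) (hk : k < N) (ι : ℚ) :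
    ∑ j ∈ Finset.range (k+1), (Nat.choose k j : ℚ[X]) *
      (pochP (X + C (ι - (↑j + 1) + 1)) j *
        pochP (C ((N:ℚ) + (↑j + 1) - 2*ι + 1)) (N - (j+1) + 1))
    = pochP (X + C ((N:ℚ) - ι + 1)) k *
        pochP (C ((N:ℚ) + (↑k + 1) - 2*ι + 1)) (N - (k+1) + 1) := by
  have htrans : ∀ j ∈ Finset.range (k+1),
      (Nat.choose k j : ℚ[X]) *
        (pochP (X + C (ι - (↑j + 1) + 1)) j *
          pochP (C ((N:ℚ) + (↑j + 1) - 2*ι + 1)) (N - (j+1) + 1))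
      = (Nat.choose k j : ℚ[X]) *
        (pochP ((X + C ι) - (j:ℚ[X])) j *
          pochP ((C ((N:ℚ) - 2*ι + 1)) + (j:ℚ[X]) + 1) ((k - j) + (N - k))) := by
    intro j hj
    simp only [Finset.mem_range] at hj
    have e1 : X + C (ι - (↑j + 1) + 1) = (X + C ι) - (j:ℚ[X]) := by
      simp only [map_add, map_sub, map_one, C_eq_natCast]; ring
    have e2 : C ((N:ℚ) + (↑j + 1) - 2*ι + 1) = (C ((N:ℚ) - 2*ι + 1)) + (j:ℚ[X]) + 1 := by
      simp only [map_add, map_sub, map_mul, map_one, C_eq_natCast, C2]; ring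
    have e3 : N - (j+1) + 1 = (k - j) + (N - k) := by omega
    rw [e1, e2, e3]
  rw [Finset.sum_congr rfl htrans, master k (X + C ι) (C ((N:ℚ) - 2*ι + 1)) (N - k)]
  have r1 : X + C ι + C ((N:ℚ) - 2*ι + 1) = X + C ((N:ℚ) - ι + 1) := by
    simp only [map_add, map_sub, map_mul, map_one, C_eq_natCast, C2]; ring
  have r2 : C ((N:ℚ) - 2*ι + 1) + (k:ℚ[X]) + 1 = C ((N:ℚ) + (↑k + 1) - 2*ι + 1) := by
    simp only [map_add, map_sub, map_mul, map_one, C_eq_natCast, C2]; ring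
  have r3 : N - k = N - (k+1) + 1 := by omega
  rw [r1, r2, r3]

lemma colNe (N k : ℕ) (hk : k < N) (ι : ℚ) :
    ∑ j ∈ Finset.range (k+1), (Nat.choose k j : ℚ[X]) *
      (pochP (X + C (ι - (↑j + 1) + 1)) j *
        pochP (C ((N:ℚ) + (↑j + 1) - 2*ι + 2)) (N - (j+1)) *
        ((2*X + C ((N:ℚ) - (↑j + 1) + 1)) * C (1/2:ℚ)))
    = pochP (X + C ((N:ℚ) - ι + 1)) k *
        pochP (C ((N:ℚ) + (↑k + 1) - 2*ι + 2)) (N - (k+1)) *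
        ((2*X + C ((N:ℚ) + (↑k + 1) - 1)) * C (1/2:ℚ)) := by
  -- split each summand
  have hsplit : ∀ j ∈ Finset.range (k+1),
      (Nat.choose k j : ℚ[X]) *
        (pochP (X + C (ι - (↑j + 1) + 1)) j *
          pochP (C ((N:ℚ) + (↑j + 1) - 2*ι + 2)) (N - (j+1)) *
          ((2*X + C ((N:ℚ) - (↑j + 1) + 1)) * C (1/2:ℚ)))
      = -(C (1/2:ℚ)) * ((Nat.choose k j : ℚ[X]) *
            (pochP (X + C (ι - (↑j + 1) + 1)) j *
              pochP (C ((N:ℚ) + (↑j + 1) - 2*ι + 1)) (N - (j+1) + 1)))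
        + (X + C ((N:ℚ) - ι + 1)) * ((Nat.choose k j : ℚ[X]) *
            (pochP (X + C (ι - (↑j + 1) + 1)) j *
              pochP (C ((N:ℚ) + (↑j + 1) - 2*ι + 2)) (N - (j+1)))) := by
    intro j hj
    simp only [Finset.mem_range] at hj
    have hsucc : pochP (C ((N:ℚ) + (↑j + 1) - 2*ι + 1)) (N - (j+1) + 1)
        = C ((N:ℚ) + (↑j + 1) - 2*ι + 1) *
            pochP (C ((N:ℚ) + (↑j + 1) - 2*ι + 2)) (N - (j+1)) := by
      rw [pochP_succ_left]
      congr 1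
      apply pochP_congr
      simp only [map_add, map_sub, map_mul, map_one, C_eq_natCast, C2]; ring
    rw [hsucc]
    have hlin : (2*X + C ((N:ℚ) - (↑j + 1) + 1)) * C (1/2:ℚ)
        = -(C ((N:ℚ) + (↑j + 1) - 2*ι + 1) * C (1/2:ℚ)) + (X + C ((N:ℚ) - ι + 1)) := by
      rw [linComb0 ((N:ℚ) + (↑j + 1) - 2*ι + 1) ((N:ℚ) - ι + 1)]
      congr 2
      ring
    rw [hlin]
    ring
  rw [Finset.sum_congr rfl hsplit, Finset.sum_add_distrib, ← Finset.mul_sum, ← Finset.mul_sum]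
  rw [colEq N k hk ι]
  -- second sum via master
  have htrans : ∀ j ∈ Finset.range (k+1),
      (Nat.choose k j : ℚ[X]) *
        (pochP (X + C (ι - (↑j + 1) + 1)) j *
          pochP (C ((N:ℚ) + (↑j + 1) - 2*ι + 2)) (N - (j+1)))
      = (Nat.choose k j : ℚ[X]) *
        (pochP ((X + C ι) - (j:ℚ[X])) j *
          pochP ((C ((N:ℚ) - 2*ι + 2)) + (j:ℚ[X]) + 1) ((k - j) + (N - (k+1)))) := by
    intro j hj
    simp only [Finset.mem_range] at hj
    have e1 : X + C (ι - (↑j + 1) + 1) = (X + C ι) - (j:ℚ[X]) := by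
      simp only [map_add, map_sub, map_one, C_eq_natCast]; ring
    have e2 : C ((N:ℚ) + (↑j + 1) - 2*ι + 2) = (C ((N:ℚ) - 2*ι + 2)) + (j:ℚ[X]) + 1 := by
      simp only [map_add, map_sub, map_mul, map_one, C_eq_natCast, C2]; ring
    have e3 : N - (j+1) = (k - j) + (N - (k+1)) := by omega
    rw [e1, e2, e3]
  rw [Finset.sum_congr rfl htrans, master k (X + C ι) (C ((N:ℚ) - 2*ι + 2)) (N - (k+1))]
  -- now assemble
  have r1 : X + C ι + C ((N:ℚ) - 2*ι + 2) = X + C ((N:ℚ) - ι + 2) := by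
    simp only [map_add, map_sub, map_mul, map_one, C_eq_natCast, C2]; ring
  have r2 : C ((N:ℚ) - 2*ι + 2) + (k:ℚ[X]) + 1 = C ((N:ℚ) + (↑k + 1) - 2*ι + 2) := by
    simp only [map_add, map_sub, map_mul, map_one, C_eq_natCast, C2]; ring
  rw [r1, r2]
  -- abbreviations
  have hsucc1 : pochP (C ((N:ℚ) + (↑k + 1) - 2*ι + 1)) (N - (k+1) + 1)
      = C ((N:ℚ) + (↑k + 1) - 2*ι + 1) *
          pochP (C ((N:ℚ) + (↑k + 1) - 2*ι + 2)) (N - (k+1)) := by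
    rw [pochP_succ_left]
    congr 1
    apply pochP_congr
    simp only [map_add, map_sub, map_mul, map_one, C_eq_natCast, C2]; ring
  have hsucc2 : (X + C ((N:ℚ) - ι + 1)) * pochP (X + C ((N:ℚ) - ι + 2)) k
      = pochP (X + C ((N:ℚ) - ι + 1)) k * (X + C ((N:ℚ) - ι + 1) + (k:ℚ[X])) := by
    have h1 : pochP (X + C ((N:ℚ) - ι + 1)) (k+1)
        = (X + C ((N:ℚ) - ι + 1)) * pochP (X + C ((N:ℚ) - ι + 2)) k := by
      rw [pochP_succ_left]
      congr 1
      apply pochP_congr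
      simp only [map_add, map_sub, map_mul, map_one, C_eq_natCast, C2]; ring
    rw [← h1, pochP_succ]
  rw [hsucc1]
  have hfin : -(C (1/2:ℚ)) * (pochP (X + C ((N:ℚ) - ι + 1)) k *
        (C ((N:ℚ) + (↑k + 1) - 2*ι + 1) *
          pochP (C ((N:ℚ) + (↑k + 1) - 2*ι + 2)) (N - (k+1))))
      + (X + C ((N:ℚ) - ι + 1)) * (pochP (X + C ((N:ℚ) - ι + 2)) k *
          pochP (C ((N:ℚ) + (↑k + 1) - 2*ι + 2)) (N - (k+1)))
      = pochP (X + C ((N:ℚ) - ι + 1)) k *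
          pochP (C ((N:ℚ) + (↑k + 1) - 2*ι + 2)) (N - (k+1)) *
          ((2*X + C ((N:ℚ) + (↑k + 1) - 1)) * C (1/2:ℚ)) := by
    have key : -(C ((N:ℚ) + (↑k + 1) - 2*ι + 1) * C (1/2:ℚ))
        + (X + C ((N:ℚ) - ι + 1) + (k:ℚ[X]))
        = (2*X + C ((N:ℚ) + (↑k + 1) - 1)) * C (1/2:ℚ) := by
      rw [linComb ((N:ℚ) + (↑k + 1) - 2*ι + 1) ((N:ℚ) - ι + 1) k]
      congr 2
      ring
    calc -(C (1/2:ℚ)) * (pochP (X + C ((N:ℚ) - ι + 1)) k *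
          (C ((N:ℚ) + (↑k + 1) - 2*ι + 1) *
            pochP (C ((N:ℚ) + (↑k + 1) - 2*ι + 2)) (N - (k+1))))
        + (X + C ((N:ℚ) - ι + 1)) * (pochP (X + C ((N:ℚ) - ι + 2)) k *
            pochP (C ((N:ℚ) + (↑k + 1) - 2*ι + 2)) (N - (k+1)))
        = ((X + C ((N:ℚ) - ι + 1)) * pochP (X + C ((N:ℚ) - ι + 2)) k) *
            pochP (C ((N:ℚ) + (↑k + 1) - 2*ι + 2)) (N - (k+1))
          - (C ((N:ℚ) + (↑k + 1) - 2*ι + 1) * C (1/2:ℚ)) *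
            (pochP (X + C ((N:ℚ) - ι + 1)) k *
              pochP (C ((N:ℚ) + (↑k + 1) - 2*ι + 2)) (N - (k+1))) := by ring
      _ = pochP (X + C ((N:ℚ) - ι + 1)) k *
            pochP (C ((N:ℚ) + (↑k + 1) - 2*ι + 2)) (N - (k+1)) *
            (-(C ((N:ℚ) + (↑k + 1) - 2*ι + 1) * C (1/2:ℚ))
              + (X + C ((N:ℚ) - ι + 1) + (k:ℚ[X]))) := by
          rw [hsucc2]; ring
      _ = _ := by rw [key]
  exact hfin

end Cols
section Entries
open Finset

lemma pochNeg (q : ℚ) (j : ℕ) :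
    pochP (-(X + C q)) j = (-1)^j * pochP (X + C (q - j + 1)) j := by
  unfold pochP
  have h1 : ∀ t ∈ Finset.range j,
      -(X + C q) + (t:ℚ[X])
      = (-1) * ((fun s : ℕ => X + C (q - j + 1) + (s:ℚ[X])) (j - 1 - t)) := by
    intro t ht
    simp only [Finset.mem_range] at ht
    have h2 : ((j - 1 - t : ℕ):ℚ[X]) = (j:ℚ[X]) - 1 - t := by
      have h3 : (j - 1 - t : ℕ) = j - (1 + t) := by omega
      rw [h3]
      push_cast [Nat.cast_sub (by omega : 1 + t ≤ j)]
      ring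
    simp only []
    rw [h2]
    simp only [map_add, map_sub, map_one, C_eq_natCast]
    ring
  rw [Finset.prod_congr rfl h1, Finset.prod_mul_distrib, Finset.prod_const]
  congr 1
  · simp
  · exact Finset.prod_range_reflect (fun s : ℕ => X + C (q - j + 1) + (s:ℚ[X])) j

/-- Entries of `Dmat N l X` as a function of natural indices. -/
noncomputable def entX (N l ii jj : ℕ) : ℚ[X] :=
  if ii + 1 = l then
    pochP (X + C (((ii + 1 : ℕ) : ℚ) - (jj + 1) + 1)) jj *
      pochP (C ((N : ℚ) + (jj + 1) - 2 * (ii + 1) + 1)) (N - (jj + 1) + 1)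
  else
    pochP (X + C (((ii + 1 : ℕ) : ℚ) - (jj + 1) + 1)) jj *
      pochP (C ((N : ℚ) + (jj + 1) - 2 * (ii + 1) + 2)) (N - (jj + 1)) *
      ((2 * X + C ((N : ℚ) - (jj + 1) + 1)) * C (1 / 2 : ℚ))

lemma Dmat_X_apply (N l : ℕ) (i j : Fin N) : Dmat N l X i j = entX N l i.1 j.1 := rfl

lemma entX_eq (N l ii jj : ℕ) (h : ii + 1 = l) :
    entX N l ii jj =
      pochP (X + C ((↑ii + 1 : ℚ) - (↑jj + 1) + 1)) jj *
        pochP (C ((N : ℚ) + (↑jj + 1) - 2 * (↑ii + 1) + 1)) (N - (jj + 1) + 1) := by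
  rw [entX, if_pos h]
  congr 2
  push_cast
  ring

lemma entX_ne (N l ii jj : ℕ) (h : ¬(ii + 1 = l)) :
    entX N l ii jj =
      pochP (X + C ((↑ii + 1 : ℚ) - (↑jj + 1) + 1)) jj *
        pochP (C ((N : ℚ) + (↑jj + 1) - 2 * (↑ii + 1) + 2)) (N - (jj + 1)) *
        ((2 * X + C ((N : ℚ) - (↑jj + 1) + 1)) * C (1 / 2 : ℚ)) := by
  rw [entX, if_neg h]
  congr 3
  push_cast
  ring

lemma finChooseSum (N K : ℕ) (hK : K < N) (F : ℕ → ℚ[X]) :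
    ∑ j : Fin N, (Nat.choose K j.1 : ℚ[X]) * F j.1
      = ∑ j ∈ Finset.range (K+1), (Nat.choose K j : ℚ[X]) * F j := by
  rw [Fin.sum_univ_eq_sum_range (fun j => (Nat.choose K j : ℚ[X]) * F j) N]
  symm
  apply Finset.sum_subset
  · exact Finset.range_subset_range.mpr hK
  · intro x hx hx'
    simp only [Finset.mem_range, not_lt] at hx hx'
    rw [Nat.choose_eq_zero_of_lt (by omega), Nat.cast_zero, zero_mul]

end Entries
section SubEntries
open Finset

/-- Entries of `Dmat N l (-(N:ℚ[X]) - X)` as a function of natural indices. -/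
noncomputable def entS (N l ii jj : ℕ) : ℚ[X] :=
  if ii + 1 = l then
    pochP ((-(N : ℚ[X]) - X) + C (((ii + 1 : ℕ) : ℚ) - (jj + 1) + 1)) jj *
      pochP (C ((N : ℚ) + (jj + 1) - 2 * (ii + 1) + 1)) (N - (jj + 1) + 1)
  else
    pochP ((-(N : ℚ[X]) - X) + C (((ii + 1 : ℕ) : ℚ) - (jj + 1) + 1)) jj *
      pochP (C ((N : ℚ) + (jj + 1) - 2 * (ii + 1) + 2)) (N - (jj + 1)) *
      ((2 * (-(N : ℚ[X]) - X) + C ((N : ℚ) - (jj + 1) + 1)) * C (1 / 2 : ℚ))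

lemma Dmat_S_apply (N l : ℕ) (i j : Fin N) :
    Dmat N l (-(N : ℚ[X]) - X) i j = entS N l i.1 j.1 := rfl

lemma pochSub (N ii jj : ℕ) :
    pochP ((-(N : ℚ[X]) - X) + C (((ii + 1 : ℕ) : ℚ) - (↑jj + 1) + 1)) jj
      = (-1)^jj * pochP (X + C ((N : ℚ) - (↑ii + 1) + 1)) jj := by
  have h1 : (-(N : ℚ[X]) - X) + C (((ii + 1 : ℕ) : ℚ) - (↑jj + 1) + 1)
      = -(X + C ((N:ℚ) - (↑ii + 1) + (↑jj + 1) - 1)) := by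
    simp only [map_add, map_sub, map_one, map_neg, C_eq_natCast]
    push_cast
    ring
  rw [h1, pochNeg]
  congr 1
  apply pochP_congr
  congr 1
  ring

lemma entS_ne (N l ii jj : ℕ) (h : ¬(ii + 1 = l)) :
    entS N l ii jj = (-1)^(jj+1) *
      (pochP (X + C ((N:ℚ) - (↑ii + 1) + 1)) jj *
        pochP (C ((N:ℚ) + (↑jj + 1) - 2*(↑ii + 1) + 2)) (N - (jj+1)) *
        ((2*X + C ((N:ℚ) + (↑jj + 1) - 1)) * C (1/2:ℚ))) := by
  rw [entS, if_neg h]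
  have h2 : 2 * (-(N : ℚ[X]) - X) + C ((N : ℚ) - (↑jj + 1) + 1)
      = -(2*X + C ((N:ℚ) + (↑jj + 1) - 1)) := by
    simp only [map_add, map_sub, map_one, map_neg, C_eq_natCast]
    push_cast
    ring
  have h3 : pochP (C ((N : ℚ) + (↑jj + 1) - 2 * (↑ii + 1) + 2)) (N - (jj + 1))
      = pochP (C ((N:ℚ) + (↑jj + 1) - 2*(↑ii + 1) + 2)) (N - (jj+1)) := rfl
  have h4 : C ((N : ℚ) + ((jj:ℚ) + 1) - 2 * ((ii:ℚ) + 1) + 2)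
      = C ((N : ℚ) + ((jj:ℚ) + 1) - 2 * (((ii+1:ℕ):ℚ)) + 2) := by
    push_cast; ring
  rw [pochSub N ii jj, h2]
  rw [show C ((N : ℚ) + (↑jj + 1) - 2 * (↑ii + 1) + 2)
      = C ((N:ℚ) + (↑jj + 1) - 2*(↑ii + 1) + 2) from rfl]
  rw [pow_succ]
  push_cast
  ring

lemma entS_eq (N l ii jj : ℕ) (h : ii + 1 = l) :
    entS N l ii jj = (-1)^jj *
      (pochP (X + C ((N:ℚ) - (↑ii + 1) + 1)) jj *
        pochP (C ((N:ℚ) + (↑jj + 1) - 2*(↑ii + 1) + 1)) (N - (jj+1) + 1)) := by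
  rw [entS, if_pos h]
  rw [pochSub N ii jj]
  push_cast
  ring

end SubEntries
section Main
open Finset

/-- `det D(−N−m; N, l) = (−1)^{N(N+1)/2 − 1} det D(m; N, l)` as polynomials
in `m`. -/
theorem det_D_symmetry (N l : ℕ) (hN : 0 < N) (hl : 1 ≤ l) (hlN : l ≤ N) :
    (Dmat N l (-(N : ℚ[X]) - X)).det =
      (-1 : ℚ[X]) ^ (N * (N + 1) / 2 - 1) * (Dmat N l X).det := by
  classical
  set W : Matrix (Fin N) (Fin N) ℚ[X] :=
    Matrix.of (fun j k : Fin N => (-1:ℚ[X])^(k.1+1) * (Nat.choose k.1 j.1 : ℚ[X])) with hW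
  set E : Matrix (Fin N) (Fin N) ℚ[X] :=
    Matrix.diagonal (fun i : Fin N => if i.1 + 1 = l then (-1:ℚ[X]) else 1) with hE
  have hfact : Dmat N l (-(N : ℚ[X]) - X) = E * (Dmat N l X * W) := by
    ext i k
    rw [hE, Matrix.diagonal_mul, Matrix.mul_apply]
    have hsum : ∑ j : Fin N, Dmat N l X i j * W j k
        = (-1:ℚ[X])^(k.1+1) *
            ∑ j ∈ Finset.range (k.1+1), (Nat.choose k.1 j : ℚ[X]) * entX N l i.1 j := by
      have h1 : ∀ j : Fin N, Dmat N l X i j * W j k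
          = (-1:ℚ[X])^(k.1+1) * ((Nat.choose k.1 j.1 : ℚ[X]) * entX N l i.1 j.1) := by
        intro j
        rw [Dmat_X_apply, hW]
        simp only [Matrix.of_apply]
        ring
      rw [Finset.sum_congr rfl (fun j _ => h1 j), ← Finset.mul_sum,
        finChooseSum N k.1 k.2 (entX N l i.1)]
    rw [hsum, Dmat_S_apply]
    by_cases hil : i.1 + 1 = l
    · -- special row
      have hcol : ∑ j ∈ Finset.range (k.1+1), (Nat.choose k.1 j : ℚ[X]) * entX N l i.1 j
          = pochP (X + C ((N:ℚ) - (↑i.1 + 1) + 1)) k.1 *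
              pochP (C ((N:ℚ) + (↑k.1 + 1) - 2*(↑i.1 + 1) + 1)) (N - (k.1+1) + 1) := by
        have h2 : ∀ j ∈ Finset.range (k.1+1),
            (Nat.choose k.1 j : ℚ[X]) * entX N l i.1 j
            = (Nat.choose k.1 j : ℚ[X]) *
                (pochP (X + C ((↑i.1 + 1 : ℚ) - (↑j + 1) + 1)) j *
                  pochP (C ((N:ℚ) + (↑j + 1) - 2*(↑i.1 + 1) + 1)) (N - (j+1) + 1)) := by
          intro j _
          rw [entX_eq N l i.1 j hil]
        rw [Finset.sum_congr rfl h2, colEq N k.1 k.2 ((i.1:ℚ) + 1)]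
      rw [hcol, entS_eq N l i.1 k.1 hil, if_pos hil]
      rw [pow_succ]
      ring
    · have hcol : ∑ j ∈ Finset.range (k.1+1), (Nat.choose k.1 j : ℚ[X]) * entX N l i.1 j
          = pochP (X + C ((N:ℚ) - (↑i.1 + 1) + 1)) k.1 *
              pochP (C ((N:ℚ) + (↑k.1 + 1) - 2*(↑i.1 + 1) + 2)) (N - (k.1+1)) *
              ((2*X + C ((N:ℚ) + (↑k.1 + 1) - 1)) * C (1/2:ℚ)) := by
        have h2 : ∀ j ∈ Finset.range (k.1+1),
            (Nat.choose k.1 j : ℚ[X]) * entX N l i.1 j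
            = (Nat.choose k.1 j : ℚ[X]) *
                (pochP (X + C ((↑i.1 + 1 : ℚ) - (↑j + 1) + 1)) j *
                  pochP (C ((N:ℚ) + (↑j + 1) - 2*(↑i.1 + 1) + 2)) (N - (j+1)) *
                  ((2*X + C ((N:ℚ) - (↑j + 1) + 1)) * C (1/2:ℚ))) := by
          intro j _
          rw [entX_ne N l i.1 j hil]
        rw [Finset.sum_congr rfl h2, colNe N k.1 k.2 ((i.1:ℚ) + 1)]
      rw [hcol, entS_ne N l i.1 k.1 hil, if_neg hil]
      ring
  rw [hfact, Matrix.det_mul, Matrix.det_mul]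
  -- det E = -1
  have hdetE : E.det = -1 := by
    rw [hE, Matrix.det_diagonal]
    have hl0 : l - 1 < N := by omega
    rw [Finset.prod_eq_single (⟨l-1, hl0⟩ : Fin N)]
    · exact if_pos (show l - 1 + 1 = l by omega)
    · intro b _ hb
      rw [if_neg]
      intro hc
      exact hb (Fin.ext (show b.1 = l - 1 by omega))
    · intro h
      exact absurd (Finset.mem_univ _) h
  -- det W
  have hdetW : W.det = (-1:ℚ[X])^(N*(N+1)/2) := by
    have htri : W.BlockTriangular id := by
      intro a b hab
      rw [hW]
      simp only [Matrix.of_apply]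
      rw [Nat.choose_eq_zero_of_lt (by exact hab), Nat.cast_zero, mul_zero]
    rw [Matrix.det_of_upperTriangular htri]
    have hdiag : ∀ k : Fin N, W k k = (-1:ℚ[X])^(k.1+1) := by
      intro k
      rw [hW]
      simp [Matrix.of_apply]
    rw [Finset.prod_congr rfl (fun k _ => hdiag k)]
    rw [Finset.prod_pow_eq_pow_sum]
    congr 1
    have hg : (∑ j ∈ Finset.range N, j) * 2 = N * (N-1) := Finset.sum_range_id_mul_two N
    have hsum2 : ∑ k : Fin N, (k.1 + 1) = (∑ j ∈ Finset.range N, j) + N := by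
      rw [Fin.sum_univ_eq_sum_range (fun j => j + 1) N, Finset.sum_add_distrib]
      simp
    have hNN : N * (N+1) = N * (N-1) + 2 * N := by
      cases N with
      | zero => rfl
      | succ n =>
        rw [Nat.add_sub_cancel]
        ring
    omega
  rw [hdetE, hdetW]
  have hT : 1 ≤ N * (N+1) / 2 := by
    have : 2 ≤ N * (N+1) := by nlinarith
    omega
  have hsgn : (-1:ℚ[X]) * ((Dmat N l X).det * (-1:ℚ[X])^(N*(N+1)/2))
      = (-1:ℚ[X])^(N*(N+1)/2 - 1) * (Dmat N l X).det := by
    have h1 : (-1:ℚ[X])^(N*(N+1)/2) = (-1:ℚ[X])^(N*(N+1)/2 - 1) * (-1:ℚ[X]) := by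
      rw [← pow_succ]
      congr 1
      omega
    rw [h1]
    ring
  exact hsgn

end Main
end

section
/- For positive integers N and l with 1 ≤ l ≤ N, let D(m;N,l) be the N×N matrix over ℚ[m] with (i,j)-entry (m+i−j+1)_{j−1}(N+j−2i+2)_{N−j}(N+2m−j+1)/2 if i ≠ l, and (m+i−j+1)_{j−1}(N+j−2i+1)_{N−j+1} if i = l. Then the polynomial ∏_{i=1}^{⌊N/2⌋} (m+i)_{N−2i+1} divides det D(m;N,l) in ℚ[m]. -/
open Polynomial

lemma pochP_add (p : ℚ[X]) (a b : ℕ) :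
    pochP p (a + b) = pochP p a * pochP (p + (a : ℚ[X])) b := by
  unfold pochP
  rw [Finset.prod_range_add]
  congr 1
  refine Finset.prod_congr rfl fun t _ => ?_
  rw [← C_eq_natCast, ← C_eq_natCast, ← C_eq_natCast]
  rw [Nat.cast_add, C_add]
  ring

lemma pochP_eq_zero {r : ℚ} {k : ℕ} (s : ℕ) (hs : s < k) (h : r + s = 0) :
    pochP (C r) k = 0 := by
  unfold pochP
  refine Finset.prod_eq_zero (Finset.mem_range.2 hs) ?_
  rw [← C_eq_natCast, ← C_add, h, C_0]

lemma pochP_one (p : ℚ[X]) : pochP p 1 = p := by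
  unfold pochP; simp

lemma two_poly : ((2 : ℚ[X])) = C (2 : ℚ) := (map_ofNat C 2).symm

lemma entry_dvd (N l i' : ℕ) (h1 : 1 ≤ i') (h2 : 2 * i' ≤ N) (hr : N - i' < N) (j : Fin N) :
    pochP (X + (i' : ℚ[X])) (N - 2 * i' + 1) ∣ Dmat N l X ⟨N - i', hr⟩ j := by
  have hk : j.1 < N := j.2
  set d : ℕ := N - 2 * i' with hd
  have hdN : 2 * i' + d = N := by omega
  have hiN : i' ≤ N := by omega
  have hcast : ((N - i' : ℕ) : ℚ) = (N : ℚ) - i' := by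
    push_cast [hiN]; ring
  have hdq : (d : ℚ) = (N : ℚ) - 2 * i' := by
    rw [hd]; push_cast [h2]; ring
  have htarget : pochP (X + (i' : ℚ[X])) (N - 2 * i' + 1)
      = pochP (X + C (i' : ℚ)) (d + 1) := by
    rw [C_eq_natCast, hd]
  simp only [Dmat, Matrix.of_apply]
  rw [htarget]
  set k : ℕ := j.1 with hkdef
  -- the first pochhammer factor common to both branches
  set c0 : ℚ := (((N - i' + 1 : ℕ) : ℚ) - (↑k + 1) + 1) with hc0
  have hc0q : c0 = (N : ℚ) - i' + 1 - k := by
    rw [hc0]; push_cast [hiN]; ring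
  rcases le_or_gt (d + 1) k with hcase | hcase
  · -- k ≥ d+1 : target divides the first factor
    have hA : pochP (X + C (i' : ℚ)) (d + 1) ∣ pochP (X + C c0) k := by
      have hkk := pochP_add (X + C c0) (k - (d + 1)) (d + 1)
      rw [show k - (d + 1) + (d + 1) = k from by omega] at hkk
      rw [hkk]
      have harg : X + C c0 + ((k - (d + 1) : ℕ) : ℚ[X]) = X + C (i' : ℚ) := by
        rw [← C_eq_natCast, add_assoc, ← C_add]
        congr 1
        have : ((k - (d + 1) : ℕ) : ℚ) = (k : ℚ) - ((d : ℚ) + 1) := by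
          push_cast [hcase]; ring
        rw [this, hc0q, hdq]; ring
      rw [harg]
      exact dvd_mul_left _ _
    split
    · exact dvd_mul_of_dvd_left hA _
    · exact dvd_mul_of_dvd_left (dvd_mul_of_dvd_left hA _) _
  · -- k ≤ d
    have hkd : k ≤ d := by omega
    split
    case isTrue hil =>
      -- row l branch: constant pochhammer vanishes
      have hzero : pochP (C ((N : ℚ) + (↑k + 1) - 2 * (↑(N - i') + 1) + 1)) (N - (k + 1) + 1) = 0 := by
        refine pochP_eq_zero (d - k) (by omega) ?_
        rw [hcast]
        have : ((d - k : ℕ) : ℚ) = (d : ℚ) - k := by push_cast [hkd]; ring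
        rw [this, hdq]; ring
      rw [hzero, mul_zero]
      exact dvd_zero _
    case isFalse hil =>
      rcases lt_or_eq_of_le hkd with hlt | heq
      · -- k < d : constant pochhammer vanishes
        have hzero : pochP (C ((N : ℚ) + (↑k + 1) - 2 * (↑(N - i') + 1) + 2)) (N - (k + 1)) = 0 := by
          refine pochP_eq_zero (d - k - 1) (by omega) ?_
          rw [hcast]
          have hc9 : ((d - k - 1 : ℕ) : ℚ) = (d : ℚ) - k - 1 := by
            rw [show d - k - 1 = d - (k + 1) from by omega, Nat.cast_sub (by omega)]
            push_cast; ring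
          rw [hc9, hdq]; ring
        rw [hzero, mul_zero, zero_mul]
        exact dvd_zero _
      · -- k = d : the linear factor supplies (X + i')
        have hkq : (k : ℚ) = (d : ℚ) := congrArg (Nat.cast : ℕ → ℚ) heq
        have harg2 : X + C c0 = X + C ((i' : ℚ) + 1) := by
          rw [hc0q]
          congr 1
          rw [hkq, hdq]; ring
        rw [heq]
        have hL : (2 * X + C ((N : ℚ) - (↑d + 1) + 1)) * C (1 / 2 : ℚ)
            = X + C (i' : ℚ) := by
          have h2' : (N : ℚ) - (↑d + 1) + 1 = 2 * i' := by
            rw [hdq]; ring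
          rw [h2', two_poly]
          rw [show C ((2:ℚ) * (i':ℚ)) = C (2:ℚ) * C (i':ℚ) from map_mul C _ _]
          rw [show (C (2:ℚ) * X + C (2:ℚ) * C (i':ℚ)) * C (1/2 : ℚ)
              = (C (2:ℚ) * C (1/2:ℚ)) * (X + C (i':ℚ)) from by ring]
          rw [← C_mul]
          norm_num
        rw [hL]
        have htsplit : pochP (X + C (i' : ℚ)) (d + 1)
            = (X + C (i' : ℚ)) * pochP (X + C c0) d := by
          rw [show d + 1 = 1 + d from by omega, pochP_add, pochP_one, harg2]
          congr 2
          rw [← C_eq_natCast, add_assoc, ← C_add]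
          norm_num
        refine ⟨pochP (C ((N:ℚ) + (↑d + 1) - 2 * (↑(N - i') + 1) + 2)) (N - (d+1)), ?_⟩
        rw [htsplit]; ring

/-- `∏_{i=1}^{⌊N/2⌋} (m+i)_{N−2i+1}` divides `det D(m;N,l)` in `ℚ[m]`. -/
theorem poch_product_dvd_det_D (N l : ℕ) (hN : 0 < N) (hl : 1 ≤ l) (hlN : l ≤ N) :
    (∏ i ∈ Finset.Icc 1 (N / 2), pochP (X + (i : ℚ[X])) (N - 2 * i + 1)) ∣
      (Dmat N l X).det := by
  classical
  rw [← Matrix.det_transpose, Matrix.det_apply]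
  refine Finset.dvd_sum fun σ _ => ?_
  have hσ : (∏ i ∈ Finset.Icc 1 (N / 2), pochP (X + (i : ℚ[X])) (N - 2 * i + 1)) ∣
      ∏ i, (Dmat N l X).transpose (σ i) i := by
    set g : ℕ → Fin N := fun i' => if h : N - i' < N then ⟨N - i', h⟩ else ⟨0, hN⟩ with hg
    have hstep1 : (∏ i' ∈ Finset.Icc 1 (N / 2), pochP (X + (i' : ℚ[X])) (N - 2 * i' + 1)) ∣
        ∏ i' ∈ Finset.Icc 1 (N / 2), (Dmat N l X).transpose (σ (g i')) (g i') := by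
      refine Finset.prod_dvd_prod_of_dvd _ _ fun i' hi' => ?_
      obtain ⟨hi1, hi2⟩ := Finset.mem_Icc.1 hi'
      have hlt : N - i' < N := by omega
      have hgv : g i' = ⟨N - i', hlt⟩ := by simp only [hg]; rw [dif_pos hlt]
      rw [hgv, Matrix.transpose_apply]
      exact entry_dvd N l i' hi1 (by omega) hlt _
    refine hstep1.trans ?_
    have himg : (∏ i' ∈ Finset.Icc 1 (N / 2), (Dmat N l X).transpose (σ (g i')) (g i'))
        = ∏ x ∈ (Finset.Icc 1 (N / 2)).image g, (Dmat N l X).transpose (σ x) x := by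
      have hinj : ∀ a ∈ Finset.Icc 1 (N / 2), ∀ b ∈ Finset.Icc 1 (N / 2),
          g a = g b → a = b := by
        intro a ha b hb hab
        obtain ⟨ha1, ha2⟩ := Finset.mem_Icc.1 ha
        obtain ⟨hb1, hb2⟩ := Finset.mem_Icc.1 hb
        have hla : N - a < N := by omega
        have hlb : N - b < N := by omega
        have hga : g a = ⟨N - a, hla⟩ := by simp only [hg]; rw [dif_pos hla]
        have hgb : g b = ⟨N - b, hlb⟩ := by simp only [hg]; rw [dif_pos hlb]
        rw [hga, hgb] at hab
        have h2 : N - a = N - b := Fin.mk.inj_iff.mp hab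
        have haN : a ≤ N := by omega
        have hbN : b ≤ N := by omega
        omega
      exact Eq.symm (Finset.prod_image (f := fun x => (Dmat N l X).transpose (σ x) x) hinj)
    rw [himg]
    exact Finset.prod_dvd_prod_of_subset _ _ _ (Finset.subset_univ _)
  obtain h1 | h1 := Int.units_eq_one_or (Equiv.Perm.sign σ)
  · rw [h1]; simpa using hσ
  · rw [h1]
    have := dvd_neg.mpr hσ
    simpa using this
end
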